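/- arXiv:2102.04536 — 8 statements merged into one kernel-verified Lean document; each statement's English description precedes it below -/
import Mathlib

section
/- Let p be an odd prime and n a positive integer with p^α exactly dividing n, α ≥ 1. Then p^{α+1} exactly divides M_{Z_n}(p + (x-1)), i.e., the product ∏_{j=0}^{n-1} (p - 1 + e^{2πij/n}) is divisible by p^{α+1} but not by p^{α+2}. -/
open Polynomial Complex Finset

noncomputable def Mzn (n : ℕ) (F : Polynomial ℤ) : ℂ :=
  ∏ j ∈ Finset.range n, Polynomial.aeval (Complex.exp (2 * Real.pi * Complex.I * j / n)) F

noncomputable def MQ (n : ℕ) (f g : Polynomial ℤ) : ℂ :=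
  ∏ j ∈ Finset.range (2 * n),
    (Polynomial.aeval (Complex.exp (2 * Real.pi * Complex.I * j / (2 * n))) f *
       Polynomial.aeval (Complex.exp (2 * Real.pi * Complex.I * j / (2 * n)))⁻¹ f -
     Complex.exp (2 * Real.pi * Complex.I * j / (2 * n)) ^ n *
       Polynomial.aeval (Complex.exp (2 * Real.pi * Complex.I * j / (2 * n))) g *
       Polynomial.aeval (Complex.exp (2 * Real.pi * Complex.I * j / (2 * n)))⁻¹ g)

/-! Since the `n`-th roots of unity are the roots of `X ^ n - 1`, the product equals
`(-1) ^ n * ((1 - p) ^ n - 1)`, and lifting the exponent gives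
`v_p ((1 - p) ^ n - 1) = v_p (-p) + v_p n = 1 + α`. -/

theorem Mzn_X_add_C {n : ℕ} (hn : 0 < n) (b : ℤ) :
    Mzn n (X + C b) = (((-1) ^ n * ((-b) ^ n - 1) : ℤ) : ℂ) := by
  set ζ : ℂ := exp (2 * Real.pi * I / n)
  have hζ : IsPrimitiveRoot ζ n := isPrimitiveRoot_exp n hn.ne'
  have hroots : (-b : ℂ) ^ n - 1 = ∏ j ∈ range n, (-b - ζ ^ j) := by
    simpa [eval_prod] using
      congrArg (eval (-b : ℂ)) (X_pow_sub_C_eq_prod hζ hn (one_pow n))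
  have hterm (j : ℕ) :
      aeval (exp (2 * Real.pi * I * j / n)) (X + C b) = -1 * (-b - ζ ^ j) := by
    rw [← exp_nat_mul, mul_div_assoc', mul_comm (j : ℂ)]
    simp
  simp only [Mzn, hterm, prod_mul_distrib, prod_const, card_range, ← hroots]
  push_cast
  rfl

theorem emultiplicity_one_sub_pow_sub_one {p : ℕ} (hp : p.Prime) (hodd : Odd p) (n : ℕ) :
    emultiplicity (p : ℤ) ((1 - p) ^ n - 1) = 1 + emultiplicity p n := by
  have hsub : (1 - p : ℤ) - 1 = -p := by ring
  have hcoprime : ¬ (p : ℤ) ∣ 1 - p := by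
    rw [dvd_sub_self_right]
    exact_mod_cast hp.not_dvd_one
  nth_rw 2 [← one_pow n]
  rw [Int.emultiplicity_pow_sub_pow hp hodd (by simp [hsub]) hcoprime, hsub,
    emultiplicity_neg, Int.natCast_emultiplicity, hp.emultiplicity_self]

theorem stmt2_general (p : ℕ) (hp : p.Prime) (hodd : Odd p) (n α : ℕ) (hn : 0 < n)
    (hdvd : p ^ α ∣ n) (hndvd : ¬ p ^ (α + 1) ∣ n)
    (M : ℤ) (hM : (M : ℂ) = Mzn n (Polynomial.C (p : ℤ) + (Polynomial.X - 1))) :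
    (p : ℤ) ^ (α + 1) ∣ M ∧ ¬ (p : ℤ) ^ (α + 2) ∣ M := by
  have hF : C (p : ℤ) + (X - 1) = X + C ((p : ℤ) - 1) := by
    rw [C_sub, C_1]
    ring
  rw [hF, Mzn_X_add_C hn, neg_sub] at hM
  have hM' : M = (-1) ^ n * ((1 - p) ^ n - 1) := by exact_mod_cast hM
  have hmult : emultiplicity (p : ℤ) M = (α + 1 : ℕ) := by
    have hsign : emultiplicity (p : ℤ) M = emultiplicity (p : ℤ) ((1 - p) ^ n - 1) := by
      rcases neg_one_pow_eq_or ℤ n with h | h <;>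
        simp only [hM', h, one_mul, neg_one_mul, emultiplicity_neg]
    rw [hsign, emultiplicity_one_sub_pow_sub_one hp hodd,
      emultiplicity_eq_of_dvd_of_not_dvd hdvd hndvd, Nat.cast_succ, add_comm]
  exact emultiplicity_eq_coe.mp hmult

theorem stmt2 (p : ℕ) (hp : p.Prime) (hodd : Odd p) (n α : ℕ) (hn : 0 < n) (hα : 1 ≤ α)
    (hdvd : p ^ α ∣ n) (hndvd : ¬ p ^ (α + 1) ∣ n)
    (M : ℤ) (hM : (M : ℂ) = Mzn n (Polynomial.C (p : ℤ) + (Polynomial.X - 1))) :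
    (p : ℤ) ^ (α + 1) ∣ M ∧ ¬ (p : ℤ) ^ (α + 2) ∣ M :=
  stmt2_general p hp hodd n α hn hdvd hndvd M hM
end

section
/- Let n be a positive integer with 2^α exactly dividing n where α ≥ 2. If F ∈ ℤ[x] and M_{Z_n}(F) = ∏_{j=0}^{n-1} F(e^{2πij/n}) is even, then 2^{α+2} divides M_{Z_n}(F). -/
/-!
`M_{Z_n}(F)` is the resultant `Res(X^n - 1, F)`. Write `n = 2^α m` with `m` odd; then
`X^n - 1 = (X^m - 1) ∏_{k<α} (X^{2^k m} + 1)` makes `M` a product of `α + 1` resultants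
`Res(f, F)`, each `f` monic and congruent to a power of `X^m - 1` modulo `2`.

If a monic `D` divides both `f` and `F` modulo a prime `p`, then `(-W X^k, E X^k)` for `k < deg D`
(where `f ≡ D E`, `F ≡ D W`) are kernel vectors of the Sylvester matrix modulo `p` in triangular
position, so `p ^ deg D ∣ Res(f, F)`.

If `M` is even, `X^m - 1` and `F` share such a factor `D` modulo `2`. When `deg D ≥ 2` all
`α + 1` factors are divisible by `4`. Otherwise `D = X - 1`, i.e. `F(1)` is even. If also
`X^2 - 1 ∣ F` modulo `2`, the `α - 1` factors with `k ≥ 1` are divisible by `4` and the other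
two by `2`. If not, `F ≡ cX + b` modulo `X^2 - 1` with `b, c` odd, so `8 ∣ F(1) F(-1)`, which
divides `Res(X^m - 1, F) Res(X^m + 1, F)` because `m` is odd; the other `α - 1` factors are even.
-/

open Polynomial Complex Finset

open Matrix

theorem Matrix.pow_card_dvd_det_of_dvd_mulVec {ι R : Type*} [Fintype ι] [LinearOrder ι]
    [CommRing R] (A : Matrix ι ι R) (p : R) (S : Finset ι) (v : ι → ι → R)
    (hv_self : ∀ j ∈ S, v j j = 1) (hv_lt : ∀ j ∈ S, ∀ i, j < i → v j i = 0)
    (hAv : ∀ j ∈ S, ∀ i, p ∣ (A *ᵥ v j) i) : p ^ S.card ∣ A.det := by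
  classical
  choose! w hw using hAv
  -- `A * V` has the columns `A *ᵥ v j = p • w j` for `j ∈ S`, and `V` is unitriangular
  let V : Matrix ι ι R := .of fun i j ↦ if j ∈ S then v j i else if i = j then 1 else 0
  let B : Matrix ι ι R := .of fun i j ↦ if j ∈ S then w j i else A i j
  have hV : V.det = 1 := by
    rw [det_of_isUpperTriangular]
    · exact prod_eq_one fun j _ ↦ by by_cases hj : j ∈ S <;> simp [V, hj, hv_self]
    · intro i j hji
      by_cases hj : j ∈ S
      · simp [V, hj, hv_lt j hj i hji]
      · simp [V, hj, (show j < i from hji).ne']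
  have hAV : A * V = B * diagonal fun j ↦ if j ∈ S then p else 1 := by
    ext i j
    rw [mul_diagonal]
    by_cases hj : j ∈ S
    · simpa [V, B, hj, Matrix.mul_apply, mulVec, dotProduct, mul_comm] using hw j hj i
    · simp [V, B, hj, Matrix.mul_apply]
  have := congrArg det hAV
  rw [det_mul, det_mul, hV, mul_one, det_diagonal, prod_ite_mem, univ_inter, prod_const] at this
  exact this ▸ dvd_mul_left _ _

lemma Finset.pow_card_dvd_prod {ι M : Type*} [CommMonoid M] {s : Finset ι} {f : ι → M} {a : M}
    (h : ∀ i ∈ s, a ∣ f i) : a ^ s.card ∣ ∏ i ∈ s, f i := by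
  simpa using prod_dvd_prod_of_dvd (fun _ ↦ a) f h

namespace Polynomial

section CommRing

variable {R : Type*} [CommRing R]

def sylvesterCoeffs (m n : ℕ) (a b : R[X]) (i : Fin (m + n)) : R :=
  if (i : ℕ) < m then a.coeff i else b.coeff (i - m)

lemma sylvester_mulVec {m n : ℕ} {f g a b : R[X]} (hf : f.natDegree ≤ m)
    (hg : g.natDegree ≤ n) (ha : a ∈ R[X]_m) (hb : b ∈ R[X]_n) :
    sylvester f g m n *ᵥ sylvesterCoeffs m n a b =
      fun i : Fin (m + n) ↦ (f * b + g * a).coeff i := by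
  have := LinearMap.toMatrix_mulVec_repr
    (((degreeLT.basis R m).prod (degreeLT.basis R n)).reindex finSumFinEquiv)
    (degreeLT.basis R (m + n)) (sylvesterMap f g hf hg) (⟨a, ha⟩, ⟨b, hb⟩)
  rw [toMatrix_sylvesterMap'] at this
  have hx : sylvesterCoeffs m n a b =
      (((degreeLT.basis R m).prod (degreeLT.basis R n)).reindex finSumFinEquiv).repr
        (⟨a, ha⟩, ⟨b, hb⟩) := by
    ext i
    refine Fin.addCases (fun j ↦ ?_) (fun j ↦ ?_) i <;> simp [sylvesterCoeffs]
  rw [hx, this]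
  ext i
  simp

lemma eval_dvd_resultant_of_isRoot {f : R[X]} (hf : f ≠ 0) (g : R[X]) {a : R}
    (ha : f.IsRoot a) : g.eval a ∣ f.resultant g := by
  nontriviality R
  obtain ⟨q, rfl⟩ : ∃ q, f = (X - C a) * q :=
    ⟨_, (mul_divByMonic_eq_iff_isRoot.2 ha).symm⟩
  have hq : q ≠ 0 := right_ne_zero_of_mul hf
  have := resultant_mul_left (X - C a) q g g.natDegree le_rfl
  rw [← (monic_X_sub_C a).natDegree_mul' hq, natDegree_X_sub_C,
    resultant_X_sub_C_left _ _ _ le_rfl] at this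
  exact ⟨_, this⟩

lemma resultant_X_pow_two_mul_sub_one {N : ℕ} (hN : 0 < N) (F : R[X]) :
    (X ^ (2 * N) - 1 : R[X]).resultant F =
      (X ^ N - 1 : R[X]).resultant F * (X ^ N + 1 : R[X]).resultant F := by
  have h₁ : (X ^ N - 1 : R[X]).Monic := by simpa using monic_X_pow_sub_C (1 : R) hN.ne'
  have h₂ : (X ^ N + 1 : R[X]).Monic := by simpa using monic_X_pow_add_C (1 : R) hN.ne'
  rw [show (X ^ (2 * N) - 1 : R[X]) = (X ^ N - 1) * (X ^ N + 1) by ring, h₁.natDegree_mul h₂]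
  exact resultant_mul_left _ _ _ _ le_rfl

lemma resultant_X_pow_two_pow_mul_sub_one {m : ℕ} (hm : 0 < m) (F : R[X]) (a : ℕ) :
    (X ^ (2 ^ a * m) - 1 : R[X]).resultant F =
      (X ^ m - 1 : R[X]).resultant F *
        ∏ k ∈ range a, (X ^ (2 ^ k * m) + 1 : R[X]).resultant F := by
  induction a with
  | zero => rw [pow_zero, one_mul, range_zero, prod_empty, mul_one]
  | succ a ih =>
    rw [pow_succ', mul_assoc, resultant_X_pow_two_mul_sub_one (by positivity), ih,
      prod_range_succ, mul_assoc]

end CommRing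

lemma exists_monic_dvd_of_not_isCoprime {K : Type*} [Field K] {f g : K[X]} (hf : f ≠ 0)
    (h : ¬ IsCoprime f g) : ∃ D : K[X], D.Monic ∧ 0 < D.natDegree ∧ D ∣ f ∧ D ∣ g := by
  by_contra! H
  refine h (isCoprime_of_irreducible_dvd (fun h0 ↦ hf h0.1) fun z hz hzf hzg ↦ ?_)
  have hu : C z.leadingCoeff⁻¹ ∣ 1 := (isUnit_C.2 (by simp [hz.ne_zero])).dvd
  refine H _ (monic_mul_leadingCoeff_inv hz.ne_zero) ?_
    ((mul_dvd_mul_left z hu).trans (by rw [mul_one]; exact hzf))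
    ((mul_dvd_mul_left z hu).trans (by rw [mul_one]; exact hzg))
  rw [natDegree_mul_C (by simp [hz.ne_zero])]
  exact hz.natDegree_pos

section Prime

variable {p : ℕ} [Fact p.Prime]

lemma X_sub_C_dvd_map_zmod_iff {F : ℤ[X]} {a : ℤ} :
    X - C (a : ZMod p) ∣ F.map (Int.castRingHom (ZMod p)) ↔ (p : ℤ) ∣ F.eval a := by
  rw [dvd_iff_isRoot, IsRoot, eval_intCast_map, Int.cast_id, eq_intCast,
    ZMod.intCast_zmod_eq_zero_iff_dvd]

lemma map_X_pow_prime_pow_mul_sub_one (a m : ℕ) :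
    (X ^ (p ^ a * m) - 1 : ℤ[X]).map (Int.castRingHom (ZMod p)) = (X ^ m - 1) ^ (p ^ a) := by
  rw [sub_pow_char_pow, one_pow, ← pow_mul, mul_comm]
  simp

lemma not_prime_dvd_resultant_of_isCoprime {f : ℤ[X]} (hf : f.Monic) {g : ℤ[X]}
    (h : IsCoprime (f.map (Int.castRingHom (ZMod p))) (g.map (Int.castRingHom (ZMod p)))) :
    ¬ (p : ℤ) ∣ f.resultant g := by
  rw [← ZMod.intCast_zmod_eq_zero_iff_dvd, ← eq_intCast (Int.castRingHom (ZMod p)),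
    ← resultant_map_map, ← hf.natDegree_map (Int.castRingHom (ZMod p)),
    ← Nat.add_sub_cancel' (natDegree_map_le (f := Int.castRingHom (ZMod p)) (p := g)),
    resultant_add_right_deg _ _ _ _ _ le_rfl, coeff_natDegree, (hf.map _).leadingCoeff, one_pow,
    one_mul]
  exact ((isUnit_resultant_iff_isCoprime (hf.map _)).2 h).ne_zero

lemma not_isCoprime_of_prime_dvd_resultant {m : ℕ} (hm : 0 < m) (a : ℕ) {F : ℤ[X]}
    (h : (p : ℤ) ∣ (X ^ (p ^ a * m) - 1 : ℤ[X]).resultant F) :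
    ¬ IsCoprime (X ^ m - 1 : (ZMod p)[X]) (F.map (Int.castRingHom (ZMod p))) := fun hc ↦ by
  have hpm : p ^ a * m ≠ 0 := (mul_pos (pow_pos (Fact.out : p.Prime).pos a) hm).ne'
  refine not_prime_dvd_resultant_of_isCoprime (by simpa using monic_X_pow_sub_C (1 : ℤ) hpm) ?_ h
  rw [map_X_pow_prime_pow_mul_sub_one]
  exact hc.pow_left

lemma prime_dvd_sylvester_mulVec {f g : ℤ[X]} {m n : ℕ} (hf : f.natDegree ≤ m)
    (hg : g.natDegree ≤ n) {a b : (ZMod p)[X]} (ha : a ∈ (ZMod p)[X]_m)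
    (hb : b ∈ (ZMod p)[X]_n)
    (hab : f.map (Int.castRingHom (ZMod p)) * b + g.map (Int.castRingHom (ZMod p)) * a = 0)
    (i : Fin (m + n)) :
    (p : ℤ) ∣ (sylvester f g m n *ᵥ fun j ↦ ((sylvesterCoeffs m n a b j).val : ℤ)) i := by
  set φ := Int.castRingHom (ZMod p)
  refine (ZMod.intCast_zmod_eq_zero_iff_dvd _ p).1 ?_
  have hv :
      φ ∘ (fun j ↦ ((sylvesterCoeffs m n a b j).val : ℤ)) = sylvesterCoeffs m n a b := by
    ext j
    simp [φ]
  rw [← eq_intCast φ, RingHom.map_mulVec, hv, ← RingHom.mapMatrix_apply, ← sylvester_map_map,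
    sylvester_mulVec (natDegree_map_le.trans hf) (natDegree_map_le.trans hg) ha hb, hab]
  exact coeff_zero _

lemma prime_pow_dvd_det_sylvester {f g : ℤ[X]} {m n d : ℕ} (hf : f.natDegree ≤ m)
    (hg : g.natDegree ≤ n) {E : (ZMod p)[X]} (hE : E.Monic) (hEd : E.natDegree + d = n)
    (a : ℕ → (ZMod p)[X]) (ha : ∀ k < d, a k ∈ (ZMod p)[X]_m)
    (hker : ∀ k < d, f.map (Int.castRingHom (ZMod p)) * (E * X ^ k) +
      g.map (Int.castRingHom (ZMod p)) * a k = 0) :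
    (p : ℤ) ^ d ∣ (sylvester f g m n).det := by
  obtain rfl | hd := Nat.eq_zero_or_pos d
  · simp
  set e := E.natDegree
  -- the lifted kernel vector `(a k, E X^k)` has its last nonzero entry, `1`, at `m + e + k`
  let v (j i : Fin (m + n)) : ℤ :=
    (sylvesterCoeffs m n (a (j - m - e)) (E * X ^ ((j : ℕ) - m - e)) i).val
  let S := Ici (⟨m + e, by omega⟩ : Fin (m + n))
  have hS : S.card = d := by simp only [S, Fin.card_Ici]; omega
  have hmem : ∀ j ∈ S, m + e ≤ (j : ℕ) := fun j hj ↦ by simpa [S, Fin.le_def] using hj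
  refine hS ▸ pow_card_dvd_det_of_dvd_mulVec _ _ S v (fun j hj ↦ ?_) (fun j hj i hij ↦ ?_)
    fun j hj ↦ ?_
  · have hj := hmem j hj
    obtain ⟨k, hk⟩ : ∃ k, (j : ℕ) - m = e + k := ⟨j - m - e, by omega⟩
    simp only [v, sylvesterCoeffs, if_neg (show ¬ (j : ℕ) < m by omega)]
    rw [hk, Nat.add_sub_cancel_left, coeff_mul_X_pow, hE.coeff_natDegree, ZMod.val_one,
      Nat.cast_one]
  · have hj := hmem j hj
    rw [Fin.lt_def] at hij
    have : (E * X ^ ((j : ℕ) - m - e)).natDegree < (i : ℕ) - m := by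
      rw [natDegree_mul_X_pow _ hE.ne_zero]; omega
    simp only [v, sylvesterCoeffs, if_neg (show ¬ (i : ℕ) < m by omega),
      coeff_eq_zero_of_natDegree_lt this, ZMod.val_zero, Nat.cast_zero]
  · have hk : (j : ℕ) - m - e < d := by have := hmem j hj; omega
    refine prime_dvd_sylvester_mulVec hf hg (ha _ hk) ?_ (hker _ hk)
    rw [mem_degreeLT]
    refine degree_le_natDegree.trans_lt ?_
    rw [natDegree_mul_X_pow _ hE.ne_zero]
    exact_mod_cast (by omega : e + ((j : ℕ) - m - e) < n)

theorem prime_pow_natDegree_dvd_resultant {f : ℤ[X]} (hf : f.Monic) {g : ℤ[X]} {n : ℕ}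
    (hg : g.natDegree ≤ n) {D : (ZMod p)[X]} (hD : D.Monic)
    (hDf : D ∣ f.map (Int.castRingHom (ZMod p))) (hDg : D ∣ g.map (Int.castRingHom (ZMod p))) :
    (p : ℤ) ^ D.natDegree ∣ f.resultant g f.natDegree n := by
  set φ := Int.castRingHom (ZMod p)
  obtain ⟨E, hE⟩ := hDf
  obtain ⟨W, hW⟩ := hDg
  have hEm : E.Monic := hD.of_mul_monic_left (hE ▸ hf.map φ)
  have hdeg : E.natDegree + D.natDegree = f.natDegree := by
    rw [add_comm, ← hD.natDegree_mul hEm, ← hE, hf.natDegree_map]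
  rw [resultant_comm]
  refine Dvd.dvd.mul_left (prime_pow_dvd_det_sylvester hg le_rfl hEm hdeg
    (fun k ↦ -(W * X ^ k)) (fun k hk ↦ ?_) fun k _ ↦ by rw [hE, hW]; ring) _
  rw [mem_degreeLT, degree_neg]
  by_cases hW0 : W = 0
  · simp [hW0]
  have hgW : (g.map φ).natDegree = D.natDegree + W.natDegree := by
    rw [hW, hD.natDegree_mul' hW0]
  have := natDegree_map_le (f := φ) (p := g)
  refine degree_le_natDegree.trans_lt ?_
  rw [natDegree_mul_X_pow _ hW0]
  exact_mod_cast (by omega : W.natDegree + k < n)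

end Prime

end Polynomial

lemma Mzn_eq_resultant {N : ℕ} (hN : 0 < N) (F : ℤ[X]) :
    Mzn N F = ((X ^ N - 1 : ℤ[X]).resultant F : ℂ) := by
  have hdeg : (X ^ N - 1 : ℤ[X]).natDegree = N := natDegree_X_pow_sub_C
  have hmonic : (X ^ N - 1 : ℂ[X]).Monic := by simpa using monic_X_pow_sub_C (1 : ℂ) hN.ne'
  have hroots : (X ^ N - 1 : ℂ[X]).roots =
      (Multiset.range N).map fun j : ℕ ↦ exp (2 * Real.pi * I * j / N) := by
    have := (Complex.isPrimitiveRoot_exp N hN.ne').nthRoots_eq (one_pow N)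
    rw [nthRoots, C_1] at this
    rw [this]
    refine Multiset.map_congr rfl fun j _ ↦ ?_
    rw [mul_one, ← Complex.exp_nat_mul]
    congr 1
    ring
  have hres := resultant_eq_prod_eval (X ^ N - 1 : ℂ[X]) (F.map (Int.castRingHom ℂ))
    F.natDegree natDegree_map_le (IsAlgClosed.splits _)
  rw [show (X ^ N - 1 : ℂ[X]).natDegree = N by simpa using natDegree_X_pow_sub_C (r := (1 : ℂ))]
    at hres
  have hmap : (X ^ N - 1 : ℤ[X]).map (Int.castRingHom ℂ) = X ^ N - 1 := by simp
  rw [← eq_intCast (Int.castRingHom ℂ), ← resultant_map_map, hmap, hdeg, hres, hroots,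
    hmonic.leadingCoeff, one_pow, one_mul, Multiset.map_map, Mzn, prod_eq_multiset_prod,
    range_val]
  simp_rw [Function.comp_def, ← algebraMap_int_eq, eval_map_algebraMap]

section Two

lemma eq_X_sub_one_of_dvd_X_pow_sub_one {m : ℕ} (hm : 0 < m) {D : (ZMod 2)[X]} (hD : D.Monic)
    (h1 : D.natDegree = 1) (hDm : D ∣ X ^ m - 1) : D = X - 1 := by
  obtain ⟨c, rfl⟩ : ∃ c, D = X - C c :=
    ⟨-D.coeff 0, by rw [map_neg, sub_neg_eq_add, ← hD.eq_X_add_C h1]⟩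
  have hc : c ^ m = 1 := by
    simpa [sub_eq_zero] using ((root_X_sub_C.2 rfl).dvd hDm : (X ^ m - 1 : (ZMod 2)[X]).IsRoot c)
  have hc0 : c ≠ 0 := by
    rintro rfl
    rw [zero_pow hm.ne'] at hc
    exact zero_ne_one hc
  rw [(by decide : ∀ x : ZMod 2, x ≠ 0 → x = 1) c hc0, C_1]

lemma eight_dvd_or_X_sq_sub_one_dvd_map {F : ℤ[X]} (h : 2 ∣ F.eval 1) :
    8 ∣ F.eval 1 * F.eval (-1) ∨
      (X ^ 2 - 1 : (ZMod 2)[X]) ∣ F.map (Int.castRingHom (ZMod 2)) := by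
  obtain ⟨q, c, b, rfl⟩ :
      ∃ q : ℤ[X], ∃ c b : ℤ, F = (X ^ 2 - 1) * q + (C c * X + C b) := by
    have hmon : (X ^ 2 - 1 : ℤ[X]).Monic := by simpa using monic_X_pow_sub_C (1 : ℤ) two_ne_zero
    have hdeg : (X ^ 2 - 1 : ℤ[X]).degree = 2 := by
      simpa using degree_X_pow_sub_C two_pos (1 : ℤ)
    have hr := hdeg ▸ degree_modByMonic_lt F hmon
    refine ⟨F /ₘ (X ^ 2 - 1), (F %ₘ (X ^ 2 - 1)).coeff 1, (F %ₘ (X ^ 2 - 1)).coeff 0, ?_⟩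
    rw [← eq_X_add_C_of_degree_le_one (Order.le_of_lt_succ hr), add_comm, modByMonic_add_div]
  have h₁ : ((X ^ 2 - 1) * q + (C c * X + C b)).eval 1 = c + b := by simp
  have h₂ : ((X ^ 2 - 1) * q + (C c * X + C b)).eval (-1) = b - c := by simp; ring
  rw [h₁] at h
  rw [h₁, h₂]
  by_cases hb : 2 ∣ b
  · right
    have hc : Int.castRingHom (ZMod 2) c = 0 :=
      (ZMod.intCast_zmod_eq_zero_iff_dvd c 2).2 (by omega)
    have hb : Int.castRingHom (ZMod 2) b = 0 := (ZMod.intCast_zmod_eq_zero_iff_dvd b 2).2 hb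
    refine ⟨q.map (Int.castRingHom (ZMod 2)), ?_⟩
    rw [Polynomial.map_add, Polynomial.map_add, Polynomial.map_mul, Polynomial.map_mul, map_C,
      map_C, hb, hc]
    simp
  · left
    obtain ⟨u, rfl⟩ : Odd b := Int.not_even_iff_odd.1 (by rwa [even_iff_two_dvd])
    obtain ⟨w, rfl⟩ : Odd c := by
      rw [← Int.not_even_iff_odd, even_iff_two_dvd]; omega
    -- `(c + b) (b - c) = 4 (u + w + 1) (u - w)`, and one of the last two factors is even
    rcases Int.even_or_odd (u - w) with ⟨t, ht⟩ | ⟨t, ht⟩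
    · exact ⟨(u + w + 1) * t, by linear_combination 4 * (u + w + 1) * ht⟩
    · exact ⟨(t + w + 1) * (u - w), by linear_combination 4 * (u - w) * ht⟩

variable {F : ℤ[X]} {D : (ZMod 2)[X]}

lemma two_pow_dvd_resultant_X_pow_sub_one {N : ℕ} (hN : 0 < N) (hD : D.Monic)
    (hDN : D ∣ X ^ N - 1) (hDF : D ∣ F.map (Int.castRingHom (ZMod 2))) :
    2 ^ D.natDegree ∣ (X ^ N - 1 : ℤ[X]).resultant F := by
  have hmon : (X ^ N - 1 : ℤ[X]).Monic := by simpa using monic_X_pow_sub_C (1 : ℤ) hN.ne'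
  exact_mod_cast prime_pow_natDegree_dvd_resultant hmon le_rfl hD (by simpa using hDN) hDF

lemma two_pow_dvd_resultant_X_pow_add_one {N : ℕ} (hN : 0 < N) (hD : D.Monic)
    (hDN : D ∣ X ^ N - 1) (hDF : D ∣ F.map (Int.castRingHom (ZMod 2))) :
    2 ^ D.natDegree ∣ (X ^ N + 1 : ℤ[X]).resultant F := by
  have hmon : (X ^ N + 1 : ℤ[X]).Monic := by simpa using monic_X_pow_add_C (1 : ℤ) hN.ne'
  have hmap : (X ^ N + 1 : ℤ[X]).map (Int.castRingHom (ZMod 2)) = X ^ N - 1 := by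
    simp [CharTwo.sub_eq_add]
  exact_mod_cast prime_pow_natDegree_dvd_resultant hmon le_rfl hD (hmap ▸ hDN) hDF

lemma two_dvd_resultant_X_pow_add_one {N : ℕ} (hN : 0 < N) (hF : 2 ∣ F.eval 1) :
    2 ∣ (X ^ N + 1 : ℤ[X]).resultant F := by
  have hX : (X - C 1 : (ZMod 2)[X]) ∣ F.map (Int.castRingHom (ZMod 2)) := by
    simpa using (X_sub_C_dvd_map_zmod_iff (p := 2) (a := 1)).2 (by exact_mod_cast hF)
  have := two_pow_dvd_resultant_X_pow_add_one hN (monic_X_sub_C 1)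
    (by simpa using sub_one_dvd_pow_sub_one (X : (ZMod 2)[X]) N) hX
  rwa [natDegree_X_sub_C, pow_one] at this

lemma two_pow_natDegree_pow_succ_dvd_resultant {m : ℕ} (hm : 0 < m) (a : ℕ) (hD : D.Monic)
    (hDm : D ∣ X ^ m - 1) (hDF : D ∣ F.map (Int.castRingHom (ZMod 2))) :
    (2 ^ D.natDegree) ^ (a + 1) ∣ (X ^ (2 ^ a * m) - 1 : ℤ[X]).resultant F := by
  rw [resultant_X_pow_two_pow_mul_sub_one hm, pow_succ']
  refine mul_dvd_mul (two_pow_dvd_resultant_X_pow_sub_one hm hD hDm hDF) ?_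
  simpa using pow_card_dvd_prod (s := range a) fun k _ ↦
    two_pow_dvd_resultant_X_pow_add_one (N := 2 ^ k * m) (by positivity) hD
      (hDm.trans (by simpa [mul_comm] using pow_one_sub_dvd_pow_mul_sub_one X m (2 ^ k))) hDF

lemma two_pow_dvd_resultant_of_X_sq_sub_one_dvd {m : ℕ} (hm : 0 < m) (a : ℕ)
    (hF : 2 ∣ F.eval 1) (h : (X ^ 2 - 1 : (ZMod 2)[X]) ∣ F.map (Int.castRingHom (ZMod 2))) :
    2 ^ (2 * a + 2) ∣ (X ^ (2 ^ (a + 1) * m) - 1 : ℤ[X]).resultant F := by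
  have hmon : (X ^ 2 - 1 : (ZMod 2)[X]).Monic := by
    simpa using monic_X_pow_sub_C (1 : ZMod 2) two_ne_zero
  have hdeg : (X ^ 2 - 1 : (ZMod 2)[X]).natDegree = 2 := by
    simpa using natDegree_X_pow_sub_C (n := 2) (r := (1 : ZMod 2))
  have hA : 2 ∣ (X ^ m - 1 : ℤ[X]).resultant F :=
    hF.trans (eval_dvd_resultant_of_isRoot (X_pow_sub_C_ne_zero hm 1) F (by simp))
  have hB : (2 ^ 2) ^ a ∣
      ∏ k ∈ range a, (X ^ (2 ^ (k + 1) * m) + 1 : ℤ[X]).resultant F := by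
    simpa [hdeg] using pow_card_dvd_prod (s := range a) fun k _ ↦
      two_pow_dvd_resultant_X_pow_add_one (N := 2 ^ (k + 1) * m) (by positivity) hmon
        (by rw [show 2 ^ (k + 1) * m = 2 * (2 ^ k * m) by ring]
            exact pow_one_sub_dvd_pow_mul_sub_one X 2 _) h
  rw [resultant_X_pow_two_pow_mul_sub_one hm, prod_range_succ']
  calc (2 : ℤ) ^ (2 * a + 2) = 2 * ((2 ^ 2) ^ a * 2) := by rw [← pow_mul]; ring
    _ ∣ _ := mul_dvd_mul hA (mul_dvd_mul hB (two_dvd_resultant_X_pow_add_one (by positivity) hF))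

lemma two_pow_dvd_resultant_of_eight_dvd {m : ℕ} (hm : Odd m) (a : ℕ) (hF : 2 ∣ F.eval 1)
    (h8 : 8 ∣ F.eval 1 * F.eval (-1)) :
    2 ^ (a + 3) ∣ (X ^ (2 ^ (a + 1) * m) - 1 : ℤ[X]).resultant F := by
  have hm₀ := hm.pos
  have hX : (X ^ m + 1 : ℤ[X]) ≠ 0 := by simpa using X_pow_sub_C_ne_zero hm₀ (-1 : ℤ)
  have hAB : F.eval 1 * F.eval (-1) ∣
      (X ^ m - 1 : ℤ[X]).resultant F * (X ^ m + 1 : ℤ[X]).resultant F :=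
    mul_dvd_mul (eval_dvd_resultant_of_isRoot (X_pow_sub_C_ne_zero hm₀ 1) F (by simp))
      (eval_dvd_resultant_of_isRoot hX F (by simp [hm.neg_one_pow]))
  have hB : 2 ^ a ∣ ∏ k ∈ range a, (X ^ (2 ^ (k + 1) * m) + 1 : ℤ[X]).resultant F := by
    simpa using pow_card_dvd_prod (s := range a) fun k _ ↦
      two_dvd_resultant_X_pow_add_one (N := 2 ^ (k + 1) * m) (by positivity) hF
  rw [resultant_X_pow_two_pow_mul_sub_one hm₀, prod_range_succ', pow_zero, one_mul]
  calc (2 : ℤ) ^ (a + 3) = 8 * 2 ^ a := by ring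
    _ ∣ _ := mul_dvd_mul (h8.trans hAB) hB
    _ = _ := by ring

end Two

theorem stmt3_general (n α : ℕ) (hα : 2 ≤ α)
    (hdvd : 2 ^ α ∣ n) (hndvd : ¬ 2 ^ (α + 1) ∣ n)
    (F : Polynomial ℤ) (M : ℤ) (hM : (M : ℂ) = Mzn n F)
    (h : 2 ∣ M) : 2 ^ (α + 2) ∣ M := by
  obtain ⟨m, rfl⟩ := hdvd
  have hm : Odd m := Nat.odd_iff.2 <| by_contra fun hm ↦
    hndvd ⟨m / 2, by rw [pow_succ, mul_assoc]; congr 1; omega⟩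
  have hm₀ := hm.pos
  obtain ⟨a, rfl⟩ : ∃ a, α = a + 1 := ⟨α - 1, by omega⟩
  obtain rfl : M = (X ^ (2 ^ (a + 1) * m) - 1 : ℤ[X]).resultant F :=
    Int.cast_injective (hM.trans (Mzn_eq_resultant (by positivity) F))
  obtain ⟨D, hD, hD0, hDm, hDF⟩ :=
    exists_monic_dvd_of_not_isCoprime (X_pow_sub_C_ne_zero hm₀ 1)
      (not_isCoprime_of_prime_dvd_resultant (p := 2) (F := F) hm₀ (a + 1) (by exact_mod_cast h))
  rcases Nat.lt_or_ge 1 D.natDegree with hD2 | hD1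
  · refine dvd_trans ?_ (two_pow_natDegree_pow_succ_dvd_resultant hm₀ (a + 1) hD hDm hDF)
    rw [← pow_mul]
    exact pow_dvd_pow 2 (by nlinarith)
  · rw [eq_X_sub_one_of_dvd_X_pow_sub_one hm₀ hD (by omega) hDm] at hDF
    have hF : 2 ∣ F.eval 1 := by
      exact_mod_cast (X_sub_C_dvd_map_zmod_iff (p := 2) (a := 1)).1 (by simpa using hDF)
    rcases eight_dvd_or_X_sq_sub_one_dvd_map hF with h8 | hsq
    · exact two_pow_dvd_resultant_of_eight_dvd hm a hF h8
    · exact (pow_dvd_pow 2 (by omega)).trans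
        (two_pow_dvd_resultant_of_X_sq_sub_one_dvd hm₀ a hF hsq)

theorem stmt3 (n α : ℕ) (hn : 0 < n) (hα : 2 ≤ α)
    (hdvd : 2 ^ α ∣ n) (hndvd : ¬ 2 ^ (α + 1) ∣ n)
    (F : Polynomial ℤ) (M : ℤ) (hM : (M : ℂ) = Mzn n F)
    (h : 2 ∣ M) : 2 ^ (α + 2) ∣ M :=
  stmt3_general n α hα hdvd hndvd F M hM h
end

section
/- Let n be a positive integer with 2^α exactly dividing n, α ≥ 2. Then 2^{α+2} exactly divides M_{Z_n}(4 + (x-1)) = ∏_{j=0}^{n-1} (3 + e^{2πij/n}). -/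
/-!
The numbers `exp (2πij/n)` are the roots of `X ^ n - 1`, so the product of `3 + ζ` over them is
`3 ^ n - (-1) ^ n`. Lifting the exponent at `2` with `3 - (-1) = 4` then gives
`v₂(3 ^ n - (-1) ^ n) = v₂(n) + 2`: for odd `n` the cofactor `∑ 3 ^ i (-1) ^ (n - 1 - i)` is odd,
and for even `n` this is the `p = 2` form of the lemma, using also `3 + (-1) = 2`.
-/

open Polynomial Complex Finset

theorem IsPrimitiveRoot.prod_add_pow {R : Type*} [CommRing R] [IsDomain R] {ζ : R} {n : ℕ}
    (hζ : IsPrimitiveRoot ζ n) (hn : 0 < n) (a : R) :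
    ∏ j ∈ range n, (a + ζ ^ j) = a ^ n - (-1) ^ n := by
  have h := congrArg (eval (-a)) (X_pow_sub_C_eq_prod hζ hn (one_pow n))
  simp only [eval_sub, eval_pow, eval_X, eval_C, eval_prod, mul_one] at h
  calc ∏ j ∈ range n, (a + ζ ^ j) = ∏ j ∈ range n, (-1) * (-a - ζ ^ j) :=
        prod_congr rfl fun j _ => by ring
    _ = (-1) ^ n * ((-a) ^ n - 1) := by rw [prod_mul_distrib, prod_const, card_range, h]
    _ = a ^ n - (-1) ^ n := by
      rw [neg_pow a, mul_sub, ← mul_assoc, ← mul_pow, neg_one_mul, neg_neg, one_pow, one_mul,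
        mul_one]

theorem Mzn_C_four_add_X_sub_one {n : ℕ} (hn : 0 < n) :
    Mzn n (C 4 + (X - 1)) = 3 ^ n - (-1) ^ n := by
  have hζ := isPrimitiveRoot_exp n hn.ne'
  rw [Mzn, ← hζ.prod_add_pow hn 3]
  refine prod_congr rfl fun j _ => ?_
  rw [← exp_nat_mul]
  simp only [map_add, map_sub, aeval_X, map_one, map_ofNat]
  ring_nf

theorem emultiplicity_two_three_pow_sub_neg_one_pow (n : ℕ) :
    emultiplicity (2 : ℤ) (3 ^ n - (-1) ^ n) = emultiplicity (2 : ℤ) n + 2 := by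
  have h_two : emultiplicity (2 : ℤ) 2 = 1 := by
    simpa using emultiplicity_pow_self (two_ne_zero (α := ℤ)) Int.prime_two.not_isUnit 1
  have h_four : emultiplicity (2 : ℤ) 4 = 2 := by
    simpa using emultiplicity_pow_self (two_ne_zero (α := ℤ)) Int.prime_two.not_isUnit 2
  have hxy : (2 : ℤ) ∣ 3 - (-1) := by norm_num
  have hx : ¬ (2 : ℤ) ∣ 3 := by norm_num
  rcases Nat.even_or_odd n with hn | hn
  · have h := Int.two_pow_sub_pow hxy hx hn
    norm_num only [h_two, h_four] at h
    rw [add_comm 3, show (3 : ℕ∞) = 2 + 1 from rfl, ← add_assoc] at h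
    exact WithTop.add_right_cancel ENat.one_ne_top h
  · have h2n : ¬ (2 : ℤ) ∣ n := by exact_mod_cast hn.not_two_dvd_nat
    rw [emultiplicity_pow_sub_pow_of_prime Int.prime_two hxy hx h2n, emultiplicity_eq_zero.2 h2n]
    norm_num [h_four]

theorem stmt4_general (n α : ℕ) (hn : 0 < n)
    (hdvd : 2 ^ α ∣ n) (hndvd : ¬ 2 ^ (α + 1) ∣ n)
    (M : ℤ) (hM : (M : ℂ) = Mzn n (Polynomial.C 4 + (Polynomial.X - 1))) :
    2 ^ (α + 2) ∣ M ∧ ¬ 2 ^ (α + 3) ∣ M := by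
  have hMn : M = 3 ^ n - (-1) ^ n := by
    rw [Mzn_C_four_add_X_sub_one hn] at hM
    exact_mod_cast hM
  have hv : emultiplicity (2 : ℤ) n = α :=
    emultiplicity_eq_coe.2 ⟨by exact_mod_cast hdvd, by exact_mod_cast hndvd⟩
  have hvM : emultiplicity (2 : ℤ) M = ↑(α + 2) := by
    rw [hMn, emultiplicity_two_three_pow_sub_neg_one_pow, hv]
    rfl
  exact emultiplicity_eq_coe.1 hvM

theorem stmt4 (n α : ℕ) (hn : 0 < n) (hα : 2 ≤ α)
    (hdvd : 2 ^ α ∣ n) (hndvd : ¬ 2 ^ (α + 1) ∣ n)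
    (M : ℤ) (hM : (M : ℂ) = Mzn n (Polynomial.C 4 + (Polynomial.X - 1))) :
    2 ^ (α + 2) ∣ M ∧ ¬ 2 ^ (α + 3) ∣ M :=
  stmt4_general n α hn hdvd hndvd M hM
end

section
/- For f, g ∈ ℤ[x] and n a positive integer, M_{Q_{4n}}(f, g) = (-1)^n · M_{Q_{4n}}(g, f). -/
open Polynomial Complex Finset

/-! At a `2n`-th root of unity `z = ζ^j` one has `z^n = (-1)^j =: ε` with `ε² = 1`, so each factor
`A - ε B` of `M(f, g)` equals `-ε (B - ε A)`, the matching factor of `M(g, f)` times `-ε`.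
The signs multiply to `∏_{j < 2n} -(-1)^j = (-1)^n`. -/

theorem Complex.exp_two_pi_I_mul_div_two_mul_pow (n j : ℕ) (hn : n ≠ 0) :
    exp (2 * Real.pi * I * j / (2 * n)) ^ n = (-1) ^ j := by
  rw [← exp_nat_mul, ← exp_pi_mul_I, ← exp_nat_mul]
  congr 1
  field_simp

theorem sub_mul_eq_neg_mul_sub_mul_of_sq_eq_one {R : Type*} [CommRing R] {ε : R} (hε : ε ^ 2 = 1)
    (a b : R) : a - ε * b = -ε * (b - ε * a) := by
  linear_combination (-a) * hε

theorem prod_range_two_mul_neg_neg_one_pow {M : Type*} [CommMonoid M] [HasDistribNeg M] (n : ℕ) :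
    ∏ j ∈ range (2 * n), -(-1 : M) ^ j = (-1) ^ n := by
  induction n with
  | zero => simp
  | succ n ih => simp [Nat.mul_succ, prod_range_succ, ih, pow_succ, pow_mul]

theorem stmt5_general (n : ℕ) (f g : Polynomial ℤ) :
    MQ n f g = (-1 : ℂ) ^ n * MQ n g f := by
  unfold MQ
  rw [← prod_range_two_mul_neg_neg_one_pow n, ← prod_mul_distrib]
  refine prod_congr rfl fun j hj => ?_
  have hn : n ≠ 0 := by rintro rfl; simp at hj
  set z := exp (2 * Real.pi * I * j / (2 * n))
  rw [show z ^ n = (-1) ^ j from exp_two_pi_I_mul_div_two_mul_pow n j hn]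
  have hε : ((-1 : ℂ) ^ j) ^ 2 = 1 := by rw [← pow_mul, mul_comm, pow_mul, neg_one_sq, one_pow]
  linear_combination sub_mul_eq_neg_mul_sub_mul_of_sq_eq_one hε
    (aeval z f * aeval z⁻¹ f) (aeval z g * aeval z⁻¹ g)

theorem stmt5 (n : ℕ) (hn : 0 < n) (f g : Polynomial ℤ) :
    MQ n f g = (-1 : ℂ) ^ n * MQ n g f :=
  stmt5_general n f g
end

section
/- For every odd integer n ≥ 3, setting H(x) = x + x^2 + ... + x^{(n-1)/2}, f(x) = 1 + (x^n+1)H(x) and g(x) = (x^n+1)H(x), one has M_{Q_{4n}}(f, g) = 2n - 1. -/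
open Polynomial Complex Finset

/-!
At a `2n`-th root of unity `z` with `z ^ n = -1` we have `g z = 0` and `f z = f z⁻¹ = 1`, so the
factor is `1`. When `z ^ n = 1` the factor collapses to `1 + 2 (H z + H z⁻¹)`, and
`H z + H z⁻¹ = z + z² + ⋯ + z ^ (n - 1)`. This is `n - 1` at `z = 1`, giving `2n - 1`, and `-1`
at the other `n - 1` roots, an even number of them.
-/

noncomputable def mqFactor (n : ℕ) (f g : ℤ[X]) (z : ℂ) : ℂ :=
  aeval z f * aeval z⁻¹ f - z ^ n * aeval z g * aeval z⁻¹ g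

lemma MQ_eq_prod_mqFactor (n : ℕ) (f g : ℤ[X]) :
    MQ n f g =
      ∏ j ∈ range (2 * n), mqFactor n f g (exp (2 * Real.pi * I / ↑(2 * n)) ^ j) := by
  have hexp (j : ℕ) :
      exp (2 * Real.pi * I * j / (2 * n)) = exp (2 * Real.pi * I / ↑(2 * n)) ^ j := by
    rw [← exp_nat_mul]
    push_cast
    ring_nf
  simp only [MQ, mqFactor, hexp]

lemma mqFactor_of_pow_eq_neg_one {n : ℕ} (h : ℤ[X]) {z : ℂ} (hz : z ^ n = -1) :
    mqFactor n (1 + (X ^ n + 1) * h) ((X ^ n + 1) * h) z = 1 := by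
  simp [mqFactor, inv_pow, hz]

lemma mqFactor_of_pow_eq_one {n : ℕ} (h : ℤ[X]) {z : ℂ} (hz : z ^ n = 1) :
    mqFactor n (1 + (X ^ n + 1) * h) ((X ^ n + 1) * h) z =
      1 + 2 * (aeval z h + aeval z⁻¹ h) := by
  simp only [mqFactor, map_add, map_mul, map_pow, map_one, aeval_X, inv_pow, hz, inv_one]
  ring

lemma sum_Icc_pow_add_sum_Icc_inv_pow {K : Type*} [Field K] {m : ℕ} {z : K}
    (hz : z ^ (2 * m + 1) = 1) (hz1 : z ≠ 1) :
    ∑ i ∈ Icc 1 m, z ^ i + ∑ i ∈ Icc 1 m, z⁻¹ ^ i = -1 := by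
  have hz0 : z ≠ 0 := by rintro rfl; simp at hz
  have hinv : ∑ i ∈ Icc 1 m, z⁻¹ ^ i = ∑ i ∈ Ico (m + 1) (2 * m + 1), z ^ i := by
    have hrefl := sum_Ico_reflect (fun i ↦ z ^ i) 1 (show m + 1 ≤ 2 * m + 1 + 1 by omega)
    rw [show 2 * m + 1 + 1 - (m + 1) = m + 1 by omega, show 2 * m + 1 + 1 - 1 = 2 * m + 1 by omega]
      at hrefl
    rw [← hrefl, ← Ico_add_one_right_eq_Icc]
    refine sum_congr rfl fun i hi ↦ ?_
    rw [mem_Ico] at hi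
    rw [pow_sub₀ z hz0 (by omega), hz, one_mul, inv_pow]
  have hgeom : ∑ i ∈ range (2 * m + 1), z ^ i = 0 := by
    rw [geom_sum_eq hz1, hz, sub_self, zero_div]
  rw [hinv, ← Ico_add_one_right_eq_Icc, sum_Ico_consecutive _ (by omega) (by omega)]
  rw [range_eq_Ico, sum_eq_sum_Ico_succ_bot (by omega), pow_zero] at hgeom
  linear_combination hgeom

lemma Finset.prod_range_two_mul {M : Type*} [CommMonoid M] (f : ℕ → M) (k : ℕ) :
    ∏ j ∈ range (2 * k), f j = ∏ i ∈ range k, f (2 * i) * f (2 * i + 1) := by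
  induction k with
  | zero => simp
  | succ k ih => rw [mul_add_one, prod_range_succ, prod_range_succ, prod_range_succ, ih, mul_assoc]

lemma IsPrimitiveRoot.pow_eq_neg_one {R : Type*} [CommRing R] [NoZeroDivisors R] {ζ : R} {n : ℕ}
    (hζ : IsPrimitiveRoot ζ (2 * n)) (hn : n ≠ 0) : ζ ^ n = -1 := by
  have h2 := hζ.pow_of_dvd hn (dvd_mul_left n 2)
  rw [Nat.mul_div_cancel _ (Nat.pos_of_ne_zero hn)] at h2
  exact h2.eq_neg_one_of_two_right

lemma mqFactor_one (m : ℕ) :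
    mqFactor (2 * m + 1) (1 + (X ^ (2 * m + 1) + 1) * ∑ i ∈ Icc 1 m, X ^ i)
      ((X ^ (2 * m + 1) + 1) * ∑ i ∈ Icc 1 m, X ^ i) 1 = 2 * (2 * m + 1 : ℕ) - 1 := by
  rw [mqFactor_of_pow_eq_one _ (one_pow _)]
  simp only [inv_one, map_sum, map_pow, aeval_X, one_pow, sum_const, Nat.card_Icc]
  push_cast
  ring

lemma mqFactor_of_pow_eq_one_of_ne_one {m : ℕ} {z : ℂ} (hz : z ^ (2 * m + 1) = 1)
    (hz1 : z ≠ 1) :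
    mqFactor (2 * m + 1) (1 + (X ^ (2 * m + 1) + 1) * ∑ i ∈ Icc 1 m, X ^ i)
      ((X ^ (2 * m + 1) + 1) * ∑ i ∈ Icc 1 m, X ^ i) z = -1 := by
  rw [mqFactor_of_pow_eq_one _ hz]
  simp only [map_sum, map_pow, aeval_X]
  linear_combination 2 * sum_Icc_pow_add_sum_Icc_inv_pow hz hz1

theorem stmt7_general (n : ℕ) (hodd : Odd n) :
    MQ n (1 + (Polynomial.X ^ n + 1) * ∑ i ∈ Finset.Icc 1 ((n - 1) / 2), Polynomial.X ^ i)
        ((Polynomial.X ^ n + 1) * ∑ i ∈ Finset.Icc 1 ((n - 1) / 2), Polynomial.X ^ i)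
      = (2 * n - 1 : ℂ) := by
  obtain ⟨m, rfl⟩ := hodd
  rw [show (2 * m + 1 - 1) / 2 = m by omega, MQ_eq_prod_mqFactor, prod_range_two_mul]
  have hζ := isPrimitiveRoot_exp (2 * (2 * m + 1)) (by omega)
  set ζ := exp (2 * Real.pi * I / ↑(2 * (2 * m + 1)))
  have hω : IsPrimitiveRoot (ζ ^ 2) (2 * m + 1) := hζ.pow (by omega) rfl
  have hodd_pow (i : ℕ) : (ζ ^ (2 * i + 1)) ^ (2 * m + 1) = -1 := by
    rw [← pow_mul, mul_comm, pow_mul, hζ.pow_eq_neg_one (by omega),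
      (odd_two_mul_add_one i).neg_one_pow]
  simp only [mqFactor_of_pow_eq_neg_one _ (hodd_pow _), mul_one, pow_mul]
  rw [prod_range_succ', pow_zero, mqFactor_one,
    prod_eq_pow_card (b := -1) fun i hi ↦ mqFactor_of_pow_eq_one_of_ne_one
      (by rw [← pow_mul, mul_comm, pow_mul, hω.pow_eq_one, one_pow])
      (hω.pow_ne_one_of_pos_of_lt i.succ_ne_zero (by rw [mem_range] at hi; omega)),
    card_range, pow_mul, neg_one_sq, one_pow, one_mul]

theorem stmt7 (n : ℕ) (hn : 3 ≤ n) (hodd : Odd n) :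
    MQ n (1 + (Polynomial.X ^ n + 1) * ∑ i ∈ Finset.Icc 1 ((n - 1) / 2), Polynomial.X ^ i)
        ((Polynomial.X ^ n + 1) * ∑ i ∈ Finset.Icc 1 ((n - 1) / 2), Polynomial.X ^ i)
      = (2 * n - 1 : ℂ) :=
  stmt7_general n hodd
end

section
/- Let n be an even positive integer and f, g ∈ ℤ[x]. If M_{Q_{4n}}(f, g) is odd, then M_{Q_{4n}}(f, g) is congruent to 1 or 5 modulo 8. -/
open Polynomial Complex Finset

/-! Let `F(z) = f(z) f(z⁻¹) - zⁿ g(z) g(z⁻¹)` and `ζ` a primitive `2n`-th root of unity.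
On `2n`-th roots of unity `F(z⁻¹) = F(z)`, so pairing `ζʲ` with `ζ⁻ʲ` gives
`M = F(1) F(-1) β²` with `β = ∏_{0<j<n} F(ζʲ)`. An automorphism `ζ ↦ ζᶜ` of `ℚ(ζ)` permutes
the pairs `{ζʲ, ζ⁻ʲ}`, so `β` is rational; being an algebraic integer, `β ∈ ℤ`.
As `n` is even, `F(±1) = f(±1)² - g(±1)²`, and `f(1) ≡ f(-1)`, `g(1) ≡ g(-1) mod 2` give
`F(1) ≡ F(-1) mod 4`. Hence `M ≡ (F(1) β)² mod 4`, so an odd `M` is `1 mod 4`. -/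
lemma isIntegral_aeval {R A : Type*} [CommRing R] [Ring A] [Algebra R A] {z : A}
    (hz : IsIntegral R z) (p : R[X]) : IsIntegral R (aeval z p) :=
  .of_mem_of_fg _ hz.fg_adjoin_singleton _ (aeval_mem_adjoin_singleton _ _)

noncomputable def qFactor {L : Type*} [Field L] (n : ℕ) (f g : ℤ[X]) (z : L) : L :=
  aeval z f * aeval z⁻¹ f - z ^ n * aeval z g * aeval z⁻¹ g

section qFactor

variable {L : Type*} [Field L] {n : ℕ} (f g : ℤ[X])

lemma qFactor_inv {z : L} (hz : z ^ (2 * n) = 1) : qFactor n f g z⁻¹ = qFactor n f g z := by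
  have hzn : (z ^ n)⁻¹ = z ^ n := inv_eq_of_mul_eq_one_right (by rw [← pow_add, ← two_mul, hz])
  rw [qFactor, qFactor, inv_inv, inv_pow, hzn]
  ring

lemma map_qFactor {L' F : Type*} [Field L'] [FunLike F L L'] [RingHomClass F L L'] (φ : F)
    (z : L) : φ (qFactor n f g z) = qFactor n f g (φ z) := by
  have hφ (x : L) (p : ℤ[X]) : φ (aeval x p) = aeval (φ x) p :=
    (aeval_algHom_apply (φ : L →+* L').toIntAlgHom x p).symm
  simp only [qFactor, map_sub, map_mul, map_pow, map_inv₀, hφ]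

lemma qFactor_one : qFactor n f g (1 : L) = ((f.eval 1 ^ 2 - g.eval 1 ^ 2 : ℤ) : L) := by
  simp [qFactor, aeval_def, sq]

lemma qFactor_neg_one (hn : Even n) :
    qFactor n f g (-1 : L) = ((f.eval (-1) ^ 2 - g.eval (-1) ^ 2 : ℤ) : L) := by
  have h (p : ℤ[X]) : aeval (-1 : L) p = ((p.eval (-1) : ℤ) : L) := by
    simpa using aeval_algebraMap_apply L (-1 : ℤ) p
  simp [qFactor, sq, hn.neg_one_pow, h]

lemma isIntegral_qFactor {z : L} (hz : IsIntegral ℤ z) (hz' : IsIntegral ℤ z⁻¹) :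
    IsIntegral ℤ (qFactor n f g z) :=
  ((isIntegral_aeval hz f).mul (isIntegral_aeval hz' f)).sub
    (((hz.pow n).mul (isIntegral_aeval hz g)).mul (isIntegral_aeval hz' g))

end qFactor

namespace IsPrimitiveRoot

variable {L : Type*} [Field L] {k : ℕ} {ζ : L}

lemma pow_val_natCast (hζ : IsPrimitiveRoot ζ k) (j : ℕ) : ζ ^ (j : ZMod k).val = ζ ^ j := by
  rw [ZMod.val_natCast, hζ.eq_orderOf, pow_mod_orderOf]

lemma pow_val_mul_val [NeZero k] (hζ : IsPrimitiveRoot ζ k) (x y : ZMod k) :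
    ζ ^ (x * y).val = (ζ ^ x.val) ^ y.val := by
  rw [← pow_mul, ← hζ.pow_val_natCast (x.val * y.val), Nat.cast_mul, ZMod.natCast_zmod_val,
    ZMod.natCast_zmod_val]

lemma pow_val_neg [NeZero k] (hζ : IsPrimitiveRoot ζ k) (x : ZMod k) :
    ζ ^ (-x).val = (ζ ^ x.val)⁻¹ := by
  refine eq_inv_of_mul_eq_one_left ?_
  rw [← pow_add, ← hζ.pow_val_natCast, Nat.cast_add, ZMod.natCast_zmod_val,
    ZMod.natCast_zmod_val, neg_add_cancel, ZMod.val_zero, pow_zero]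

end IsPrimitiveRoot

namespace ZMod

lemma two_mul_natCast_ne_zero {n j : ℕ} (hj : j ∈ Ico 1 n) : 2 * (j : ZMod (2 * n)) ≠ 0 := by
  rw [mem_Ico] at hj
  have hndvd : ¬ 2 * n ∣ 2 * j := fun h => by have := Nat.le_of_dvd (by omega) h; omega
  exact_mod_cast mt (natCast_eq_zero_iff _ _).mp hndvd

theorem prod_range_two_mul_eq {M : Type*} [CommMonoid M] {n : ℕ} (hn : 0 < n)
    (u : ZMod (2 * n) → M) (hu : ∀ x, u (-x) = u x) :
    ∏ j ∈ range (2 * n), u j = u 0 * u n * (∏ j ∈ Ico 1 n, u j) ^ 2 := by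
  have hreflect : ∏ j ∈ Ico (n + 1) (2 * n), u j = ∏ j ∈ Ico 1 n, u j := by
    refine prod_nbij' (fun j => 2 * n - j) (fun j => 2 * n - j) ?_ ?_ ?_ ?_ fun j hj => ?_
    iterate 4 · intro j hj; simp only [mem_Ico] at hj ⊢; omega
    rw [mem_Ico] at hj
    rw [Nat.cast_sub (by omega), natCast_self, zero_sub, hu]
  rw [range_eq_Ico, ← prod_Ico_consecutive (fun j : ℕ => u j) (Nat.zero_le (n + 1)) (by omega),
    hreflect, prod_Ico_succ_top (Nat.zero_le n), ← prod_Ico_consecutive _ (Nat.zero_le 1) hn,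
    prod_Ico_succ_top le_rfl, Ico_self, prod_empty, one_mul, Nat.cast_zero, sq]
  ac_rfl

variable {n : ℕ} [NeZero n]

lemma natAbs_valMinAbs_mem_Ico {x : ZMod (2 * n)} (hx : 2 * x ≠ 0) :
    x.valMinAbs.natAbs ∈ Ico 1 n := by
  have hle := natAbs_valMinAbs_le x
  rw [Nat.mul_div_cancel_left _ two_pos] at hle
  rw [mem_Ico, Nat.one_le_iff_ne_zero, Ne, Int.natAbs_eq_zero, valMinAbs_eq_zero]
  refine ⟨fun h => hx (by rw [h, mul_zero]), lt_of_le_of_ne hle fun h => hx ?_⟩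
  have hcast := natCast_natAbs_valMinAbs x
  rw [h] at hcast
  have h2n : 2 * (n : ZMod (2 * n)) = 0 := by exact_mod_cast natCast_self (2 * n)
  split_ifs at hcast
  · rw [← hcast, h2n]
  · rw [← neg_eq_iff_eq_neg.mpr hcast, mul_neg, h2n, neg_zero]

lemma natCast_natAbs_valMinAbs_eq_or (x : ZMod (2 * n)) :
    (x.valMinAbs.natAbs : ZMod (2 * n)) = x ∨ (x.valMinAbs.natAbs : ZMod (2 * n)) = -x := by
  rw [natCast_natAbs_valMinAbs]
  split_ifs
  exacts [Or.inl rfl, Or.inr rfl]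

lemma natAbs_valMinAbs_inv_mul_natAbs_valMinAbs_mul (a : (ZMod (2 * n))ˣ) {j : ℕ} (hj : j ≤ n) :
    (a⁻¹ * ((a * j : ZMod (2 * n)).valMinAbs.natAbs : ZMod (2 * n)) : ZMod (2 * n)).valMinAbs.natAbs
      = j := by
  have hj' : (j : ZMod (2 * n)).valMinAbs.natAbs = j := by
    rw [valMinAbs_natCast_of_le_half (by omega), Int.natAbs_natCast]
  rcases natCast_natAbs_valMinAbs_eq_or (a * j : ZMod (2 * n)) with h | h <;>
    rw [h] <;> simp [hj', natAbs_valMinAbs_neg]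

/-- `j ↦ |a * j|` (absolute least residue) permutes `Ico 1 n`, with inverse `j ↦ |a⁻¹ * j|`. -/
theorem prod_Ico_unit_mul_eq {M : Type*} [CommMonoid M]
    (u : ZMod (2 * n) → M) (hu : ∀ x, u (-x) = u x) (a : (ZMod (2 * n))ˣ) :
    ∏ j ∈ Ico 1 n, u (a * j) = ∏ j ∈ Ico 1 n, u j := by
  have hmem (b : (ZMod (2 * n))ˣ) :
      ∀ j ∈ Ico 1 n, (b * j : ZMod (2 * n)).valMinAbs.natAbs ∈ Ico 1 n :=
    fun j hj => natAbs_valMinAbs_mem_Ico (by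
      rw [mul_left_comm, Ne, b.mul_right_eq_zero]; exact two_mul_natCast_ne_zero hj)
  refine prod_nbij' (fun j => (a * j : ZMod (2 * n)).valMinAbs.natAbs)
    (fun j => (a⁻¹ * j : ZMod (2 * n)).valMinAbs.natAbs) (hmem a) (hmem a⁻¹) ?_ ?_ ?_
  · intro j hj
    exact natAbs_valMinAbs_inv_mul_natAbs_valMinAbs_mul a (mem_Ico.mp hj).2.le
  · intro j hj
    simpa using natAbs_valMinAbs_inv_mul_natAbs_valMinAbs_mul a⁻¹ (mem_Ico.mp hj).2.le
  · intro j _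
    rcases natCast_natAbs_valMinAbs_eq_or (a * j : ZMod (2 * n)) with h | h <;> rw [h]
    exact (hu _).symm

end ZMod

section primitiveRoot

variable {L : Type*} [Field L] {n : ℕ} [NeZero n] (f g : ℤ[X]) {ζ : L}

lemma qFactor_pow_val_neg (hζ : IsPrimitiveRoot ζ (2 * n)) (x : ZMod (2 * n)) :
    qFactor n f g (ζ ^ (-x).val) = qFactor n f g (ζ ^ x.val) := by
  rw [hζ.pow_val_neg,
    qFactor_inv f g (by rw [← pow_mul, mul_comm, pow_mul, hζ.pow_eq_one, one_pow])]

theorem exists_intCast_eq_prod_qFactor_of_isGalois [Algebra ℚ L] [IsGalois ℚ L]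
    [FiniteDimensional ℚ L] (hζ : IsPrimitiveRoot ζ (2 * n)) :
    ∃ b : ℤ, ∏ j ∈ Ico 1 n, qFactor n f g (ζ ^ j) = b := by
  set β := ∏ j ∈ Ico 1 n, qFactor n f g (ζ ^ j)
  have hfix (σ : L ≃ₐ[ℚ] L) : σ β = β := by
    have hσ := ZMod.prod_Ico_unit_mul_eq (fun x => qFactor n f g (ζ ^ x.val))
      (qFactor_pow_val_neg f g hζ) (hζ.autToPow ℚ σ)
    simp only [hζ.pow_val_mul_val, hζ.autToPow_spec ℚ σ, hζ.pow_val_natCast,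
      (hζ.map_of_injective σ.injective).pow_val_natCast] at hσ
    simp only [β, map_prod, map_qFactor, map_pow, hσ]
  obtain ⟨q, hq⟩ := (IsGalois.mem_range_algebraMap_iff_fixed β).mpr hfix
  have hint : IsIntegral ℤ β := IsIntegral.prod _ fun j _ =>
    isIntegral_qFactor f g ((hζ.isIntegral (NeZero.pos _)).pow j)
      (by rw [← inv_pow]; exact (hζ.inv.isIntegral (NeZero.pos _)).pow j)
  rw [← hq, isIntegral_algebraMap_iff (algebraMap ℚ L).injective,
    IsIntegrallyClosed.isIntegral_iff] at hint
  obtain ⟨b, rfl⟩ := hint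
  exact ⟨b, by rw [← hq]; simp⟩

theorem exists_intCast_eq_prod_qFactor [CharZero L] (hζ : IsPrimitiveRoot ζ (2 * n)) :
    ∃ b : ℤ, ∏ j ∈ Ico 1 n, qFactor n f g (ζ ^ j) = b := by
  -- `CyclotomicField` is a cyclotomic extension for this algebra, not `DivisionRing.toRatAlgebra`
  let := CyclotomicField.algebra (2 * n) ℚ
  have hζK := IsCyclotomicExtension.zeta_spec (2 * n) ℚ (CyclotomicField (2 * n) ℚ)
  have := IsCyclotomicExtension.isGalois {2 * n} ℚ (CyclotomicField (2 * n) ℚ)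
  have := IsCyclotomicExtension.finiteDimensional {2 * n} ℚ (CyclotomicField (2 * n) ℚ)
  have hirr := cyclotomic.irreducible_rat (NeZero.pos (2 * n))
  let e := hζK.embeddingsEquivPrimitiveRoots L hirr
  let φ := e.symm ⟨ζ, (mem_primitiveRoots (NeZero.pos _)).mpr hζ⟩
  have hφ : φ (IsCyclotomicExtension.zeta (2 * n) ℚ _) = ζ := by
    rw [← hζK.embeddingsEquivPrimitiveRoots_apply_coe L hirr, e.apply_symm_apply]
  obtain ⟨b, hb⟩ := exists_intCast_eq_prod_qFactor_of_isGalois f g hζK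
  refine ⟨b, ?_⟩
  simpa [map_prod, map_qFactor, hφ] using congrArg φ hb

theorem exists_prod_range_qFactor_eq [CharZero L] (heven : Even n)
    (hζ : IsPrimitiveRoot ζ (2 * n)) :
    ∃ b : ℤ, ∏ j ∈ range (2 * n), qFactor n f g (ζ ^ j) =
      ((f.eval 1 ^ 2 - g.eval 1 ^ 2) * (f.eval (-1) ^ 2 - g.eval (-1) ^ 2) * b ^ 2 : ℤ) := by
  obtain ⟨b, hb⟩ := exists_intCast_eq_prod_qFactor f g hζ
  refine ⟨b, ?_⟩
  have hpair := ZMod.prod_range_two_mul_eq (NeZero.pos n) (fun x => qFactor n f g (ζ ^ x.val))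
    (qFactor_pow_val_neg f g hζ)
  have hζn : ζ ^ n = -1 := (hζ.pow (NeZero.pos _) (mul_comm 2 n)).eq_neg_one_of_two_right
  simp only [hζ.pow_val_natCast, ZMod.val_zero, pow_zero, hζn] at hpair
  rw [hpair, qFactor_one, qFactor_neg_one f g heven, hb]
  push_cast
  ring

end primitiveRoot

theorem MQ_eq_prod_qFactor (n : ℕ) (f g : ℤ[X]) :
    MQ n f g = ∏ j ∈ range (2 * n),
      qFactor n f g (cexp (2 * Real.pi * I / (2 * n : ℕ)) ^ j) := by
  refine prod_congr rfl fun j _ => ?_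
  have hexp : cexp (2 * Real.pi * I * j / (2 * n)) = cexp (2 * Real.pi * I / (2 * n : ℕ)) ^ j := by
    rw [← exp_nat_mul]
    push_cast
    ring_nf
  rw [qFactor, hexp]

theorem Int.emod_eight_eq_one_or_five_of_odd {a b c d w M : ℤ}
    (hM : M = (a ^ 2 - b ^ 2) * (c ^ 2 - d ^ 2) * w ^ 2) (hac : 2 ∣ a - c) (hbd : 2 ∣ b - d)
    (hodd : Odd M) : M % 8 = 1 ∨ M % 8 = 5 := by
  obtain ⟨s, hs⟩ := hac
  obtain ⟨t, ht⟩ := hbd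
  obtain rfl : a = c + 2 * s := by linarith
  obtain rfl : b = d + 2 * t := by linarith
  set k := s * c + s ^ 2 - t * d - t ^ 2
  have hM_sq : M = ((c ^ 2 - d ^ 2) * w) ^ 2 + 4 * (k * (c ^ 2 - d ^ 2) * w ^ 2) := by
    rw [hM]; ring
  have hx : Odd ((c ^ 2 - d ^ 2) * w) := by
    by_contra hx
    obtain ⟨r, hr⟩ := Int.not_odd_iff_even.mp hx
    exact Int.not_even_iff_odd.mpr hodd ⟨2 * r ^ 2 + 2 * (k * (c ^ 2 - d ^ 2) * w ^ 2), by
      rw [hM_sq, hr]; ring⟩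
  have h4 := Int.sq_mod_four_eq_one_of_odd hx
  omega

theorem stmt12 (n : ℕ) (hn : 0 < n) (heven : Even n)
    (f g : Polynomial ℤ) (M : ℤ) (hM : (M : ℂ) = MQ n f g)
    (h : Odd M) : M % 8 = 1 ∨ M % 8 = 5 := by
  have : NeZero n := ⟨hn.ne'⟩
  obtain ⟨b, hb⟩ := exists_prod_range_qFactor_eq f g heven
    (Complex.isPrimitiveRoot_exp (2 * n) (NeZero.ne _))
  rw [MQ_eq_prod_qFactor, hb] at hM
  have two_dvd_eval_sub (p : ℤ[X]) : 2 ∣ p.eval 1 - p.eval (-1) := by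
    simpa using sub_dvd_eval_sub 1 (-1) p
  exact Int.emod_eight_eq_one_or_five_of_odd (Int.cast_injective hM) (two_dvd_eval_sub f)
    (two_dvd_eval_sub g) h
end

section
/- Let p be an odd prime. With f(x) = 1 + x^2 and g(x) = (x-1)·Φ_p(x^2), one has M_{Q_{4p}}(f, g) = 2^5 · (p^2+1)/2 = 16(p^2+1). -/
/-!
Let `z` run over the `2p`-th roots of unity. Since `(X + 1) * g = X ^ (2p) - 1`, `g` vanishes at
every such `z` except `z = -1`, so the factor at `z` is just `f(z) f(z⁻¹) = (1 + z²)(1 + z⁻²)`,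
while at `z = -1` it is `4 + 4p²`, because `g(-1) = -2 Φ_p(1) = -2p`. As `z` runs over the
`2p`-th roots of unity, `ω = z²` runs twice over the `p`-th roots of unity, and
`∏ (1 + ω) = 2` for odd `p` (evaluate `X ^ p - 1 = ∏ (X - ω)` at `-1`). Hence the `f`-parts
multiply to `2² · 2² = 16`, and the factor at `-1` contributes the extra `1 + p²`.
-/

open Polynomial Complex Finset

namespace IsPrimitiveRoot

variable {R : Type*} [CommRing R] [IsDomain R] {n : ℕ} {ω : R}

theorem prod_range_one_add_pow_of_odd (hω : IsPrimitiveRoot ω n) (hn : Odd n) :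
    ∏ j ∈ range n, (1 + ω ^ j) = 2 := by
  have h := congrArg (eval (-1 : R)) (X_pow_sub_C_eq_prod hω hn.pos (one_pow n))
  simp only [eval_sub, eval_pow, eval_X, eval_C, eval_prod, mul_one, hn.neg_one_pow] at h
  have hneg : ∀ j, -1 - ω ^ j = -(1 + ω ^ j) := fun j => by ring
  simp only [hneg, prod_neg, card_range, hn.neg_one_pow] at h
  linear_combination h

theorem prod_range_two_mul_one_add_pow_of_odd (hω : IsPrimitiveRoot ω n) (hn : Odd n) :
    ∏ j ∈ range (2 * n), (1 + ω ^ j) = 4 := by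
  simp only [two_mul, prod_range_add, pow_add, hω.pow_eq_one, one_mul,
    hω.prod_range_one_add_pow_of_odd hn]
  norm_num

end IsPrimitiveRoot

theorem X_add_one_mul_X_sub_one_mul_cyclotomic_comp_X_sq (R : Type*) [CommRing R] (p : ℕ)
    [Fact p.Prime] :
    (X + 1 : R[X]) * ((X - 1) * (cyclotomic p R).comp (X ^ 2)) = X ^ (2 * p) - 1 :=
  calc (X + 1 : R[X]) * ((X - 1) * (cyclotomic p R).comp (X ^ 2))
      = (cyclotomic p R * (X - 1)).comp (X ^ 2) := by
        simp only [mul_comp, sub_comp, X_comp, one_comp]; ring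
    _ = X ^ (2 * p) - 1 := by
        rw [cyclotomic_prime_mul_X_sub_one, sub_comp, X_pow_comp, one_comp, ← pow_mul]

section

variable {K : Type*} [CommRing K] {p : ℕ} [Fact p.Prime]

theorem aeval_X_sub_one_mul_cyclotomic_comp_X_sq_eq_zero [NoZeroDivisors K] {z : K}
    (hz : z ^ (2 * p) = 1) (hz' : z ≠ -1) :
    aeval z ((X - 1) * (cyclotomic p ℤ).comp (X ^ 2)) = 0 := by
  have h := congrArg (aeval z) (X_add_one_mul_X_sub_one_mul_cyclotomic_comp_X_sq ℤ p)
  rw [map_mul, map_sub, map_pow, map_one, aeval_X, hz, sub_self] at h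
  refine (mul_eq_zero.1 h).resolve_left ?_
  simpa [add_eq_zero_iff_eq_neg] using hz'

theorem aeval_neg_one_X_sub_one_mul_cyclotomic_comp_X_sq :
    aeval (-1 : K) ((X - 1) * (cyclotomic p ℤ).comp (X ^ 2)) = -2 * p := by
  have hcyc : aeval (1 : K) (cyclotomic p ℤ) = p := by
    rw [← map_one (algebraMap ℤ K), aeval_algebraMap_apply, coe_aeval_eq_eval,
      eval_one_cyclotomic_prime, algebraMap_int_eq, eq_intCast, Int.cast_natCast]
  simp only [map_mul, map_sub, aeval_X, map_one, aeval_comp, map_pow, neg_one_sq, hcyc]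
  ring

end

noncomputable def MQfactor (n : ℕ) (f g : ℤ[X]) (z : ℂ) : ℂ :=
  aeval z f * aeval z⁻¹ f - z ^ n * aeval z g * aeval z⁻¹ g

theorem MQ_eq_prod_MQfactor (n : ℕ) (f g : ℤ[X]) :
    MQ n f g = ∏ j ∈ range (2 * n), MQfactor n f g (exp (2 * Real.pi * I / (2 * n)) ^ j) := by
  refine prod_congr rfl fun j _ => ?_
  have hexp : exp (2 * Real.pi * I * j / (2 * n)) = exp (2 * Real.pi * I / (2 * n)) ^ j := by
    rw [← exp_nat_mul]; ring_nf
  rw [MQfactor, hexp]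

section

variable {p : ℕ} [Fact p.Prime]

theorem MQfactor_of_pow_eq_one_of_ne_neg_one {z : ℂ} (hz : z ^ (2 * p) = 1) (hz' : z ≠ -1) :
    MQfactor p (1 + X ^ 2) ((X - 1) * (cyclotomic p ℤ).comp (X ^ 2)) z
      = (1 + z ^ 2) * (1 + z⁻¹ ^ 2) := by
  rw [MQfactor, aeval_X_sub_one_mul_cyclotomic_comp_X_sq_eq_zero hz hz']
  simp

theorem MQfactor_neg_one (hodd : Odd p) :
    MQfactor p (1 + X ^ 2) ((X - 1) * (cyclotomic p ℤ).comp (X ^ 2)) (-1)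
      = 4 * (1 + p ^ 2) := by
  rw [MQfactor, inv_neg, inv_one, aeval_neg_one_X_sub_one_mul_cyclotomic_comp_X_sq,
    hodd.neg_one_pow]
  simp only [map_add, map_one, map_pow, aeval_X]
  ring

end

theorem stmt18 (p : ℕ) (hp : p.Prime) (hodd : Odd p) :
    MQ p (1 + Polynomial.X ^ 2)
        ((Polynomial.X - 1) * (Polynomial.cyclotomic p ℤ).comp (Polynomial.X ^ 2))
      = (16 * (p ^ 2 + 1) : ℂ) := by
  have : Fact p.Prime := ⟨hp⟩
  have hp0 : 0 < p := hp.pos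
  set ζ := exp (2 * Real.pi * I / (2 * p))
  have hζ : IsPrimitiveRoot ζ (2 * p) := by
    simpa using isPrimitiveRoot_exp (2 * p) (by omega)
  have hω : IsPrimitiveRoot (ζ ^ 2) p := hζ.pow (by omega) rfl
  have hζp : ζ ^ p = -1 := (hζ.pow (by omega) (mul_comm 2 p)).eq_neg_one_of_two_right
  have hfactor : ∀ j ∈ range (2 * p),
      MQfactor p (1 + X ^ 2) ((X - 1) * (cyclotomic p ℤ).comp (X ^ 2)) (ζ ^ j)
        = (1 + (ζ ^ 2) ^ j) * (1 + (ζ ^ 2)⁻¹ ^ j) * if j = p then 1 + (p : ℂ) ^ 2 else 1 := by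
    intro j hj
    by_cases hjp : j = p
    · rw [hjp, hζp, MQfactor_neg_one hodd, hω.pow_eq_one, hω.inv.pow_eq_one, if_pos rfl]
      norm_num
    · have hne : ζ ^ j ≠ -1 := by
        rw [← hζp]
        exact fun h => hjp (hζ.pow_inj (mem_range.1 hj) (by omega) h)
      have hroot : (ζ ^ j) ^ (2 * p) = 1 := by rw [pow_right_comm, hζ.pow_eq_one, one_pow]
      rw [MQfactor_of_pow_eq_one_of_ne_neg_one hroot hne, if_neg hjp, mul_one, inv_pow, inv_pow,
        pow_right_comm]
  rw [MQ_eq_prod_MQfactor, prod_congr rfl hfactor, prod_mul_distrib, prod_mul_distrib,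
    prod_ite_eq', if_pos (mem_range.2 (by omega)), hω.prod_range_two_mul_one_add_pow_of_odd hodd,
    hω.inv.prod_range_two_mul_one_add_pow_of_odd hodd]
  ring
end

section
/- Let p be a prime with p ≡ 1 mod 4 and let A, B be integers with A^2 + B^2 = 2p. With f(x) = (1+x) + A·(x^p - 1)·Φ_p(x^2) and g(x) = B·(x^p - 1)·Φ_p(x^2), one has M_{Q_{4p}}(f, g) = 2^5 · p^5. -/
/-!
Write `ζ` for a primitive `2p`-th root of unity. For `z = ζ ^ j` with `z ≠ ±1`, `z²` is a primitive
`p`-th root of unity, so `Φ_p(z²) = Φ_p(z⁻²) = 0`, `g(z) = 0` and the factor at `z` is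
`(1 + z)(1 + z⁻¹)`; cancelling `X² - 1` from `X^(2p) - 1 = ∏ (X - ζ ^ j)` and evaluating at `-1`
shows that these factors multiply to `p²`. At `z = 1` the factor is `f(1)² = 4`, and at `z = -1`,
since `Φ_p(1) = p`, it is `4p²(A² + B²) = 8p³`.
-/

open Polynomial Complex Finset

namespace IsPrimitiveRoot

lemma pow_half_eq_neg_one {R : Type*} [CommRing R] [IsDomain R] {n : ℕ} {ζ : R} (hn : 0 < n)
    (hζ : IsPrimitiveRoot ζ (2 * n)) : ζ ^ n = -1 :=
  (hζ.pow (by omega) (mul_comm 2 n)).eq_neg_one_of_two_right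

lemma pow_sq_of_not_dvd {M : Type*} [CommMonoid M] {p j : ℕ} {ζ : M} (hp : p.Prime)
    (hζ : IsPrimitiveRoot ζ (2 * p)) (hj : ¬ p ∣ j) : IsPrimitiveRoot ((ζ ^ j) ^ 2) p := by
  rw [← pow_mul, mul_comm, pow_mul]
  exact (hζ.pow (Nat.mul_pos two_pos hp.pos) rfl).pow_of_coprime j
    (hp.coprime_iff_not_dvd.2 hj).symm

lemma prod_erase_one_add_pow {R : Type*} [CommRing R] [IsDomain R] {n : ℕ} {ζ : R} (hn : 0 < n)
    (hζ : IsPrimitiveRoot ζ (2 * n)) :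
    ∏ j ∈ ((range (2 * n)).erase 0).erase n, (1 + ζ ^ j) = n := by
  have h0 : 0 ∈ range (2 * n) := mem_range.2 (by omega)
  have hn' : n ∈ (range (2 * n)).erase 0 := by simp only [mem_erase, mem_range]; omega
  have hfactor : (X ^ (2 * n) - C 1 : R[X]) =
      (X - C 1) * ((X - C (-1)) * ∑ i ∈ range n, (X ^ 2) ^ i) := by
    rw [pow_mul, C_1, ← mul_geom_sum, C_neg, C_1]; ring
  have hroots := X_pow_sub_C_eq_prod hζ (by omega) (one_pow (2 * n))
  rw [hfactor, ← mul_prod_erase _ _ h0, ← mul_prod_erase _ _ hn', pow_zero, one_mul,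
    hζ.pow_half_eq_neg_one hn, neg_one_mul] at hroots
  have hcofactor :=
    mul_left_cancel₀ (X_sub_C_ne_zero _) (mul_left_cancel₀ (X_sub_C_ne_zero _) hroots)
  apply_fun eval (-1) at hcofactor
  simp only [eval_finsetSum, eval_pow, eval_X, eval_prod, eval_sub, eval_C, mul_one, neg_one_sq,
    one_pow, sum_const, card_range, nsmul_one] at hcofactor
  have hcard : #(((range (2 * n)).erase 0).erase n) = 2 * (n - 1) := by
    rw [card_erase_of_mem hn', card_erase_of_mem h0, card_range]; omega
  simp only [hcofactor, ← neg_add', prod_neg, hcard, pow_mul, neg_one_sq, one_pow, one_mul]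

lemma prod_erase_one_add_pow_mul_one_add_inv_pow {K : Type*} [Field K] {n : ℕ} {ζ : K}
    (hn : 0 < n) (hζ : IsPrimitiveRoot ζ (2 * n)) :
    ∏ j ∈ ((range (2 * n)).erase 0).erase n, ((1 + ζ ^ j) * (1 + (ζ ^ j)⁻¹)) = (n : K) ^ 2 := by
  simp only [prod_mul_distrib, ← inv_pow, hζ.prod_erase_one_add_pow hn,
    hζ.inv.prod_erase_one_add_pow hn, sq]

end IsPrimitiveRoot

lemma Nat.not_dvd_of_ne_of_lt_two_mul {p j : ℕ} (h0 : j ≠ 0) (hp : j ≠ p) (hlt : j < 2 * p) :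
    ¬ p ∣ j := by
  rintro ⟨c, rfl⟩
  rcases c with _ | _ | c
  · simp at h0
  · simp at hp
  · nlinarith

noncomputable def MQFactor (n : ℕ) (f g : ℤ[X]) (z : ℂ) : ℂ :=
  aeval z f * aeval z⁻¹ f - z ^ n * aeval z g * aeval z⁻¹ g

lemma MQ_eq_prod_MQFactor (n : ℕ) (f g : ℤ[X]) :
    MQ n f g = ∏ j ∈ range (2 * n), MQFactor n f g (exp (2 * Real.pi * I / (2 * n)) ^ j) := by
  refine prod_congr rfl fun j _ ↦ ?_
  have hexp : (j : ℂ) * (2 * Real.pi * I / (2 * n)) = 2 * Real.pi * I * j / (2 * n) := by ring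
  rw [MQFactor, ← exp_nat_mul _ j, hexp]

lemma isPrimitiveRoot_exp_two_mul (n : ℕ) (hn : n ≠ 0) :
    IsPrimitiveRoot (exp (2 * Real.pi * I / (2 * n))) (2 * n) := by
  simpa using isPrimitiveRoot_exp (2 * n) (by omega)

section

variable (p : ℕ) (A B : ℤ)

noncomputable def polyF : ℤ[X] := (1 + X) + C A * (X ^ p - 1) * (cyclotomic p ℤ).comp (X ^ 2)

noncomputable def polyG : ℤ[X] := C B * (X ^ p - 1) * (cyclotomic p ℤ).comp (X ^ 2)

lemma aeval_cyclotomic_comp_X_sq (z : ℂ) :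
    aeval z ((cyclotomic p ℤ).comp (X ^ 2)) = eval (z ^ 2) (cyclotomic p ℂ) := by
  rw [aeval_comp, map_pow, aeval_X, aeval_def, eval₂_eq_eval_map, map_cyclotomic]

lemma aeval_polyF (z : ℂ) :
    aeval z (polyF p A) = 1 + z + A * (z ^ p - 1) * eval (z ^ 2) (cyclotomic p ℂ) := by
  simp [polyF, aeval_cyclotomic_comp_X_sq]

lemma aeval_polyG (z : ℂ) :
    aeval z (polyG p B) = B * (z ^ p - 1) * eval (z ^ 2) (cyclotomic p ℂ) := by
  simp [polyG, aeval_cyclotomic_comp_X_sq]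

lemma MQFactor_of_isPrimitiveRoot_sq {z : ℂ} (hp : 0 < p) (hz : IsPrimitiveRoot (z ^ 2) p) :
    MQFactor p (polyF p A) (polyG p B) z = (1 + z) * (1 + z⁻¹) := by
  have hzsq : eval (z ^ 2) (cyclotomic p ℂ) = 0 := (isRoot_cyclotomic_iff_charZero hp).2 hz
  have hzinvsq : eval (z⁻¹ ^ 2) (cyclotomic p ℂ) = 0 :=
    (isRoot_cyclotomic_iff_charZero hp).2 (inv_pow z 2 ▸ hz.inv)
  simp only [MQFactor, aeval_polyF, aeval_polyG, hzsq, hzinvsq]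
  ring

lemma MQFactor_one : MQFactor p (polyF p A) (polyG p B) 1 = 4 := by
  norm_num [MQFactor, aeval_polyF, aeval_polyG]

lemma MQFactor_neg_one (hp : p.Prime) (hodd : Odd p) :
    MQFactor p (polyF p A) (polyG p B) (-1) = 4 * p ^ 2 * (A ^ 2 + B ^ 2) := by
  have := Fact.mk hp
  simp only [MQFactor, aeval_polyF, aeval_polyG, inv_neg, inv_one, neg_one_sq, hodd.neg_one_pow,
    eval_one_cyclotomic_prime]
  ring

lemma prod_MQFactor_eq (hp : p.Prime) (hodd : Odd p) {ζ : ℂ} (hζ : IsPrimitiveRoot ζ (2 * p)) :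
    ∏ j ∈ range (2 * p), MQFactor p (polyF p A) (polyG p B) (ζ ^ j) =
      4 * (4 * p ^ 2 * (A ^ 2 + B ^ 2)) * p ^ 2 := by
  have h0 : 0 ∈ range (2 * p) := mem_range.2 (by have := hp.pos; omega)
  have hp' : p ∈ (range (2 * p)).erase 0 := by
    simp only [mem_erase, mem_range]; have := hp.pos; omega
  have hgeneric : ∀ j ∈ ((range (2 * p)).erase 0).erase p,
      MQFactor p (polyF p A) (polyG p B) (ζ ^ j) = (1 + ζ ^ j) * (1 + (ζ ^ j)⁻¹) := by
    intro j hj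
    simp only [mem_erase, mem_range] at hj
    exact MQFactor_of_isPrimitiveRoot_sq p A B hp.pos
      (hζ.pow_sq_of_not_dvd hp (Nat.not_dvd_of_ne_of_lt_two_mul hj.2.1 hj.1 hj.2.2))
  rw [← mul_prod_erase _ _ h0, ← mul_prod_erase _ _ hp', pow_zero, hζ.pow_half_eq_neg_one hp.pos,
    MQFactor_one, MQFactor_neg_one p A B hp hodd, prod_congr rfl hgeneric,
    hζ.prod_erase_one_add_pow_mul_one_add_inv_pow hp.pos, ← mul_assoc]

end

theorem stmt19 (p : ℕ) (hp : p.Prime) (hp1 : p % 4 = 1)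
    (A B : ℤ) (hAB : A ^ 2 + B ^ 2 = 2 * p) :
    MQ p ((1 + Polynomial.X) +
          Polynomial.C A * (Polynomial.X ^ p - 1) * (Polynomial.cyclotomic p ℤ).comp (Polynomial.X ^ 2))
        (Polynomial.C B * (Polynomial.X ^ p - 1) * (Polynomial.cyclotomic p ℤ).comp (Polynomial.X ^ 2))
      = (2 ^ 5 * p ^ 5 : ℂ) := by
  have hodd : Odd p := Nat.odd_iff.2 (by omega)
  have hAB' : (A : ℂ) ^ 2 + B ^ 2 = 2 * p := by exact_mod_cast hAB
  change MQ p (polyF p A) (polyG p B) = _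
  rw [MQ_eq_prod_MQFactor,
    prod_MQFactor_eq p A B hp hodd (isPrimitiveRoot_exp_two_mul p hp.ne_zero), hAB']
  ring
end
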